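/- arXiv:1912.10183 — 8 statements merged into one kernel-verified Lean document; each statement's English description precedes it below -/
import Mathlib

section
/- Let x be a periodic point of a semiflow (T,X). Then for every periodic point x' ∈ X, either orb(x) = orb(x') or orb(x) ∩ orb(x') = ∅. -/
/-- The orbit of a point under the action `φ`. -/
def Semiflow.orb {T X : Type*} (φ : T → X → X) (x : X) : Set X :=
  Set.range fun t => φ t x

/-- The fixer of a point: the set of monoid elements fixing it. -/
def Semiflow.fix {T X : Type*} (φ : T → X → X) (x : X) : Set T :=
  {t | φ t x = x}

/-- A subset `A` of `T` is syndetic if some compact `K ⊆ T` satisfies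
`(t + K) ∩ A ≠ ∅` for every `t`. -/
def Syndetic {T : Type*} [AddCommMonoid T] [TopologicalSpace T] (A : Set T) : Prop :=
  ∃ K : Set T, IsCompact K ∧ ∀ t : T, ∃ k ∈ K, t + k ∈ A

/-- A point is periodic if its fixer is syndetic (it is automatically a submonoid). -/
def Semiflow.Periodic {T X : Type*} [AddCommMonoid T] [TopologicalSpace T]
    (φ : T → X → X) (x : X) : Prop :=
  Syndetic (Semiflow.fix φ x)

/-- The orbit of any point on the orbit of a periodic point equals the original orbit. -/
lemma Semiflow.orb_apply_eq {T X : Type*} [AddCommMonoid T] [TopologicalSpace T]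
    (φ : T → X → X)
    (hact : ∀ (s t : T) (x : X), φ s (φ t x) = φ (s + t) x)
    (x : X) (hx : Semiflow.Periodic φ x) (s : T) :
    Semiflow.orb φ (φ s x) = Semiflow.orb φ x := by
  obtain ⟨K, -, hK⟩ := hx
  obtain ⟨k, -, hk⟩ := hK s
  ext y
  constructor
  · rintro ⟨t, rfl⟩
    exact ⟨t + s, (hact t s x).symm⟩
  · rintro ⟨t, rfl⟩
    refine ⟨t + k, ?_⟩
    show φ (t + k) (φ s x) = φ t x
    have : φ (t + k) (φ s x) = φ t (φ (s + k) x) := by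
      rw [hact, hact, add_assoc, add_comm k s]
    rw [this, hk]

/-- Orbits of periodic points coincide or are disjoint. -/
theorem periodic_orbits_eq_or_disjoint
{T X : Type*} [AddCommMonoid T] [TopologicalSpace T] [ContinuousAdd T]
    [TopologicalSpace X] [T2Space X]
    (hT : ¬ IsCompact (Set.univ : Set T))
    (φ : T → X → X)
    (hcont : Continuous fun p : T × X => φ p.1 p.2)
    (hact : ∀ (s t : T) (x : X), φ s (φ t x) = φ (s + t) x)
    (hid : ∀ x : X, φ 0 x = x)
    (x : X) (hx : Semiflow.Periodic φ x) :
    ∀ x' : X, Semiflow.Periodic φ x' →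
      Semiflow.orb φ x = Semiflow.orb φ x' ∨
      Semiflow.orb φ x ∩ Semiflow.orb φ x' = ∅ := by
  intro x' hx'
  rcases Set.eq_empty_or_nonempty (Semiflow.orb φ x ∩ Semiflow.orb φ x') with h | ⟨y, ⟨s, hs⟩, ⟨s', hs'⟩⟩
  · exact Or.inr h
  · left
    calc Semiflow.orb φ x = Semiflow.orb φ (φ s x) :=
          (Semiflow.orb_apply_eq φ hact x hx s).symm
      _ = Semiflow.orb φ (φ s' x') := by rw [show φ s x = y from hs, show φ s' x' = y from hs']
      _ = Semiflow.orb φ x' := Semiflow.orb_apply_eq φ hact x' hx' s'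
end

section
/- Let x be a periodic point of a semiflow (T,X). Then for every x' ∈ orb(x) one has Fix(x') = Fix(x); in particular, every point of orb(x) is periodic. -/
/-- If `x` is periodic, every point of its orbit has the same fixer;
in particular every point of the orbit is periodic. -/
theorem fixer_of_mem_orbit_of_periodic
{T X : Type*} [AddCommMonoid T] [TopologicalSpace T] [ContinuousAdd T]
    [TopologicalSpace X] [T2Space X]
    (hT : ¬ IsCompact (Set.univ : Set T))
    (φ : T → X → X)
    (hcont : Continuous fun p : T × X => φ p.1 p.2)
    (hact : ∀ (s t : T) (x : X), φ s (φ t x) = φ (s + t) x)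
    (hid : ∀ x : X, φ 0 x = x)
    (x : X) (hx : Semiflow.Periodic φ x) :
    ∀ x' ∈ Semiflow.orb φ x,
      Semiflow.fix φ x' = Semiflow.fix φ x ∧ Semiflow.Periodic φ x' := by
  rintro x' ⟨s, rfl⟩
  have key : Semiflow.fix φ (φ s x) = Semiflow.fix φ x := by
    obtain ⟨K, -, hK⟩ := hx
    obtain ⟨k, -, hk⟩ := hK s
    ext t
    simp only [Semiflow.fix, Set.mem_setOf_eq]
    constructor
    · intro h
      have h1 : φ (t + (s + k)) x = φ t x := by
        rw [← hact, hk]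
      have h2 : φ (t + (s + k)) x = x := by
        have : t + (s + k) = k + (t + s) := by abel
        rw [this, ← hact, ← hact, h, hact, add_comm k s, hk]
      rw [← h1, h2]
    · intro h
      rw [hact, add_comm t s, ← hact, h]
  refine ⟨key, ?_⟩
  rw [Semiflow.Periodic, key]
  exact hx
end

section
/- Let x be a periodic point of a semiflow (T,X) and let K be a compact subset of T such that (t+K) ∩ Fix(x) ≠ ∅ for every t ∈ T. Then orb(x) = K.x = {k.x : k ∈ K}; in particular, orb(x) is a compact subset of X. -/
/-- If `K` is a corresponding compact for the syndetic fixer of a periodic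
point `x`, then `orb(x) = K.x`; in particular the orbit is compact. -/
theorem orbit_eq_compact_image_of_periodic
{T X : Type*} [AddCommMonoid T] [TopologicalSpace T] [ContinuousAdd T]
    [TopologicalSpace X] [T2Space X]
    (hT : ¬ IsCompact (Set.univ : Set T))
    (φ : T → X → X)
    (hcont : Continuous fun p : T × X => φ p.1 p.2)
    (hact : ∀ (s t : T) (x : X), φ s (φ t x) = φ (s + t) x)
    (hid : ∀ x : X, φ 0 x = x)
    (x : X) (K : Set T) (hK : IsCompact K)
    (hsyn : ∀ t : T, ∃ k ∈ K, t + k ∈ Semiflow.fix φ x) :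
    Semiflow.orb φ x = (fun k => φ k x) '' K ∧ IsCompact (Semiflow.orb φ x) := by
  have heq : Semiflow.orb φ x = (fun k => φ k x) '' K := by
    apply Set.Subset.antisymm
    · rintro y ⟨t, rfl⟩
      obtain ⟨k₁, hk₁, hf₁⟩ := hsyn t
      obtain ⟨k₂, hk₂, hf₂⟩ := hsyn k₁
      refine ⟨k₂, hk₂, ?_⟩
      have hf₁' : φ (t + k₁) x = x := hf₁
      have hf₂' : φ (k₁ + k₂) x = x := hf₂
      calc φ k₂ x = φ k₂ (φ (t + k₁) x) := by rw [hf₁']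
        _ = φ (k₂ + (t + k₁)) x := hact _ _ _
        _ = φ (t + (k₁ + k₂)) x := by rw [show k₂ + (t + k₁) = t + (k₁ + k₂) by
              rw [add_comm k₂, add_assoc, add_comm k₁ k₂]]
        _ = φ t (φ (k₁ + k₂) x) := (hact _ _ _).symm
        _ = φ t x := by rw [hf₂']
    · rintro y ⟨k, _, rfl⟩
      exact ⟨k, rfl⟩
  refine ⟨heq, ?_⟩
  rw [heq]
  exact hK.image (hcont.comp (continuous_id.prodMk continuous_const))
end

section
/- Let (T,X) be a semiflow on a metric space X and let x ∈ X be a periodic point such that X = orb(x). Then X is compact, the semiflow (T,X) is minimal, and (T,X) is uniformly equicontinuous. -/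
/-- Topological transitivity. -/
def Semiflow.TopTrans {T X : Type*} [TopologicalSpace X] (φ : T → X → X) : Prop :=
  ∀ U V : Set X, IsOpen U → IsOpen V → U.Nonempty → V.Nonempty →
    ∃ t : T, ((fun x => φ t x) '' U ∩ V).Nonempty

/-- Dense set of periodic points. -/
def Semiflow.DPP {T X : Type*} [AddCommMonoid T] [TopologicalSpace T] [TopologicalSpace X]
    (φ : T → X → X) : Prop :=
  Dense {x : X | Semiflow.Periodic φ x}

/-- Minimality: every orbit closure is the whole space. -/
def Semiflow.Minimal {T X : Type*} [TopologicalSpace X] (φ : T → X → X) : Prop :=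
  ∀ y : X, closure (Semiflow.orb φ y) = Set.univ

/-- Sensitivity on initial conditions. -/
def Semiflow.Sensitive {T X : Type*} [PseudoMetricSpace X] (φ : T → X → X) : Prop :=
  ∃ c > (0 : ℝ), ∀ x : X, ∀ ε > (0 : ℝ),
    ∃ y : X, dist x y < ε ∧ ∃ t : T, c ≤ dist (φ t x) (φ t y)

/-- Eventual sensitivity on initial conditions. -/
def Semiflow.EvSensitive {T X : Type*} [PseudoMetricSpace X] (φ : T → X → X) : Prop :=
  ∃ c > (0 : ℝ), ∀ x : X, ∀ ε > (0 : ℝ), ∃ t₀ t : T, ∃ y : X,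
    dist (φ t₀ x) y < ε ∧ c ≤ dist (φ t (φ t₀ x)) (φ t y)

/-- Uniform equicontinuity of the semiflow. -/
def Semiflow.UnifEquicont {T X : Type*} [PseudoMetricSpace X] (φ : T → X → X) : Prop :=
  ∀ ε > (0 : ℝ), ∃ δ > (0 : ℝ), ∀ x₁ x₂ : X, dist x₁ x₂ < δ →
    ∀ t : T, dist (φ t x₁) (φ t x₂) < ε

/-- If the phase space is the orbit of a periodic point, then it is compact
and the semiflow is minimal and uniformly equicontinuous. -/
theorem compact_minimal_unifEquicont_of_orbit_eq_univ
{T X : Type*} [AddCommMonoid T] [TopologicalSpace T] [ContinuousAdd T]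
    [MetricSpace X]
    (hT : ¬ IsCompact (Set.univ : Set T))
    (φ : T → X → X)
    (hcont : Continuous fun p : T × X => φ p.1 p.2)
    (hact : ∀ (s t : T) (x : X), φ s (φ t x) = φ (s + t) x)
    (hid : ∀ x : X, φ 0 x = x)
    (x : X) (hx : Semiflow.Periodic φ x)
    (hXorb : Semiflow.orb φ x = Set.univ) :
    IsCompact (Set.univ : Set X) ∧ Semiflow.Minimal φ ∧ Semiflow.UnifEquicont φ := by
  obtain ⟨K, hK, hsyn⟩ := hx
  -- every element of the fixer fixes every point of X
  have hsurj : ∀ y : X, ∃ t : T, φ t x = y := by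
    intro y
    have : y ∈ Semiflow.orb φ x := hXorb ▸ Set.mem_univ y
    exact this
  have hfixall : ∀ s ∈ Semiflow.fix φ x, ∀ y : X, φ s y = y := by
    intro s hs y
    obtain ⟨u, rfl⟩ := hsurj y
    calc φ s (φ u x) = φ (s + u) x := hact s u x
      _ = φ (u + s) x := by rw [add_comm]
      _ = φ u (φ s x) := (hact u s x).symm
      _ = φ u x := by rw [hs]
  -- every φ t agrees on X with φ k for some k ∈ K
  have hB : ∀ t : T, ∃ k ∈ K, ∀ y : X, φ t y = φ k y := by
    intro t
    obtain ⟨k, hkK, hk⟩ := hsyn t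
    obtain ⟨k', hk'K, hk'⟩ := hsyn k
    refine ⟨k', hk'K, fun y => ?_⟩
    calc φ t y = φ t (φ (k + k') y) := by rw [hfixall _ hk' y]
      _ = φ (t + (k + k')) y := hact _ _ _
      _ = φ (k' + (t + k)) y := by rw [show t + (k + k') = k' + (t + k) by abel]
      _ = φ k' (φ (t + k) y) := (hact _ _ _).symm
      _ = φ k' y := by rw [hfixall _ hk y]
  -- compactness
  have hcx : Continuous fun t : T => φ t x :=
    hcont.comp (continuous_id.prodMk continuous_const)
  have himg : (Set.univ : Set X) = (fun k : T => φ k x) '' K := by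
    apply Set.eq_of_subset_of_subset
    · intro y _
      obtain ⟨t, rfl⟩ := hsurj y
      obtain ⟨k, hkK, hkF⟩ := hB t
      exact ⟨k, hkK, (hkF x).symm⟩
    · exact fun _ _ => Set.mem_univ _
  have hcompact : IsCompact (Set.univ : Set X) := himg ▸ hK.image hcx
  refine ⟨hcompact, ?_, ?_⟩
  · -- minimality: every orbit is everything
    intro y
    have horb : Semiflow.orb φ y = Set.univ := by
      apply Set.eq_univ_of_forall
      intro z
      obtain ⟨u, rfl⟩ := hsurj z
      obtain ⟨s, rfl⟩ := hsurj y
      obtain ⟨k, hkK, hk⟩ := hsyn s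
      refine ⟨u + k, ?_⟩
      calc φ (u + k) (φ s x) = φ (u + k + s) x := hact _ _ _
        _ = φ (u + (k + s)) x := by rw [add_assoc]
        _ = φ u (φ (k + s) x) := (hact _ _ _).symm
        _ = φ u x := by rw [show k + s = s + k from add_comm k s, hk]
    rw [horb, closure_univ]
  · -- uniform equicontinuity
    intro ε hε
    haveI : CompactSpace X := isCompact_univ_iff.mp hcompact
    haveI : CompactSpace K := isCompact_iff_compactSpace.mp hK
    set S : Set (K × X × X) :=
      {p | ε ≤ dist (φ (p.1 : T) p.2.1) (φ (p.1 : T) p.2.2)} with hS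
    have hc1 : Continuous fun p : K × X × X => φ (p.1 : T) p.2.1 :=
      hcont.comp ((continuous_subtype_val.comp continuous_fst).prodMk
        (continuous_fst.comp continuous_snd))
    have hc2 : Continuous fun p : K × X × X => φ (p.1 : T) p.2.2 :=
      hcont.comp ((continuous_subtype_val.comp continuous_fst).prodMk
        (continuous_snd.comp continuous_snd))
    have hSclosed : IsClosed S :=
      isClosed_le continuous_const (hc1.dist hc2)
    have hScompact : IsCompact S := hSclosed.isCompact
    rcases S.eq_empty_or_nonempty with hSe | hSne
    · refine ⟨1, one_pos, fun y₁ y₂ _ t => ?_⟩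
      obtain ⟨k, hkK, hkF⟩ := hB t
      rw [hkF y₁, hkF y₂]
      by_contra h
      push_neg at h
      have hmem : (⟨⟨k, hkK⟩, y₁, y₂⟩ : K × X × X) ∈ S := h
      rw [hSe] at hmem
      exact hmem
    · obtain ⟨p₀, hp₀S, hmin⟩ := hScompact.exists_isMinOn hSne
        ((continuous_fst.comp continuous_snd).dist
          (continuous_snd.comp continuous_snd)).continuousOn
      set δ := dist p₀.2.1 p₀.2.2 with hδdef
      have hδpos : 0 < δ := by
        rcases lt_or_eq_of_le (dist_nonneg (x := p₀.2.1) (y := p₀.2.2)) with h | h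
        · exact h
        · exfalso
          have heq : p₀.2.1 = p₀.2.2 := dist_eq_zero.mp h.symm
          have : ε ≤ dist (φ (p₀.1 : T) p₀.2.1) (φ (p₀.1 : T) p₀.2.2) := hp₀S
          rw [heq, dist_self] at this
          exact absurd (lt_of_lt_of_le hε this) (lt_irrefl 0)
      refine ⟨δ, hδpos, fun y₁ y₂ hd t => ?_⟩
      obtain ⟨k, hkK, hkF⟩ := hB t
      rw [hkF y₁, hkF y₂]
      by_contra h
      push_neg at h
      have hmem : (⟨⟨k, hkK⟩, y₁, y₂⟩ : K × X × X) ∈ S := h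
      have := hmin hmem
      simp only [Set.mem_setOf_eq] at this
      exact absurd hd (not_lt.mpr this)
end

section
/- Let (T,X) be a semiflow on a metric space X which has a dense set of periodic points and is non-minimal. Then there exists a number c > 0 such that for every x ∈ X there is a periodic point q ∈ X with d(x, orb(q)) ≥ 4c, where d(x, orb(q)) denotes the distance from x to the set orb(q). -/
open Filter Topology

/-- The orbit of a periodic point is contained in the image of its compact "syndetic witness". -/
private lemma orb_subset_image' {T X : Type*} [AddCommMonoid T]
    (φ : T → X → X) (hact : ∀ (s t : T) (x : X), φ s (φ t x) = φ (s + t) x)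
    {q : X} {K : Set T} (hK : ∀ t : T, ∃ k ∈ K, t + k ∈ Semiflow.fix φ q) :
    Semiflow.orb φ q ⊆ (fun k => φ k q) '' K := by
  rintro z ⟨t, rfl⟩
  obtain ⟨k, hkK, hk⟩ := hK t
  obtain ⟨k', hk'K, hk'⟩ := hK k
  refine ⟨k', hk'K, ?_⟩
  have h1 : φ (t + k) q = q := hk
  have h2 : φ (k + k') q = q := hk'
  show φ k' q = φ t q
  calc φ k' q = φ k' (φ (t + k) q) := by rw [h1]
    _ = φ (k' + (t + k)) q := hact _ _ _
    _ = φ (t + (k + k')) q := by rw [show k' + (t + k) = t + (k + k') by abel]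
    _ = φ t (φ (k + k') q) := (hact _ _ _).symm
    _ = φ t q := by rw [h2]

/-- Uniform-continuity modulus at a point, uniformly over a compact set of times. -/
private lemma exists_modulus' {T X : Type*} [TopologicalSpace T] [MetricSpace X]
    (φ : T → X → X) (hcont : Continuous fun p : T × X => φ p.1 p.2)
    {K : Set T} (hK : IsCompact K) (v : X) {ε : ℝ} (hε : 0 < ε) :
    ∃ δ > (0:ℝ), ∀ k ∈ K, ∀ w : X, dist w v < δ → dist (φ k w) (φ k v) < ε := by
  have hg : Continuous fun p : T × X => dist (φ p.1 p.2) (φ p.1 v) :=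
    hcont.dist (hcont.comp (continuous_fst.prodMk continuous_const))
  have hopen : IsOpen {p : T × X | dist (φ p.1 p.2) (φ p.1 v) < ε} :=
    isOpen_lt hg continuous_const
  have hsub : K ×ˢ ({v} : Set X) ⊆ {p : T × X | dist (φ p.1 p.2) (φ p.1 v) < ε} := by
    rintro ⟨k, w⟩ ⟨hk, hw⟩
    obtain rfl : w = v := hw
    simpa using hε
  obtain ⟨U, V, hUo, hVo, hKU, hvV, hUV⟩ :=
    generalized_tube_lemma hK isCompact_singleton hopen hsub
  obtain ⟨δ, hδ, hball⟩ := Metric.isOpen_iff.1 hVo v (hvV rfl)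
  refine ⟨δ, hδ, fun k hk w hw => ?_⟩
  exact hUV (Set.mk_mem_prod (hKU hk) (hball (by simpa [Metric.mem_ball] using hw)))

/-- Two periodic points with `p` outside the orbit closure of `q` have orbits
at positive distance from each other. -/
private lemma orbit_separation' {T X : Type*} [AddCommMonoid T] [TopologicalSpace T]
    [MetricSpace X]
    (φ : T → X → X)
    (hcont : Continuous fun p : T × X => φ p.1 p.2)
    (hact : ∀ (s t : T) (x : X), φ s (φ t x) = φ (s + t) x)
    {p q : X} (hp : Semiflow.Periodic φ p) (hq : Semiflow.Periodic φ q)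
    (hpq : p ∉ closure (Semiflow.orb φ q)) :
    ∃ δ > (0:ℝ), ∀ z ∈ Semiflow.orb φ p, ∀ y ∈ Semiflow.orb φ q, δ ≤ dist z y := by
  classical
  obtain ⟨Kp, hKpc, hKp⟩ := hp
  obtain ⟨Kq, hKqc, hKq⟩ := hq
  by_contra h
  push_neg at h
  have hsel : ∀ n : ℕ, ∃ ky : T × X, ky.1 ∈ Kp ∧ ky.2 ∈ Semiflow.orb φ q ∧
      ∃ s : T, φ (s + ky.1) p = p ∧ dist (φ s p) ky.2 < 1 / ((n:ℝ) + 1) := by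
    intro n
    obtain ⟨z, hz, y, hy, hzy⟩ := h (1 / ((n:ℝ) + 1)) (by positivity)
    obtain ⟨s, rfl⟩ := hz
    obtain ⟨k, hkK, hk⟩ := hKp s
    exact ⟨(k, y), hkK, hy, s, hk, hzy⟩
  choose seq hseq1 hseq2 hseq3 using hsel
  choose sfun hs1 hs2 using hseq3
  have hCqcont : Continuous fun k : T => φ k q :=
    hcont.comp (continuous_id.prodMk continuous_const)
  have hCqc : IsCompact ((fun k : T => φ k q) '' Kq) := hKqc.image hCqcont
  have horbsub : Semiflow.orb φ q ⊆ (fun k : T => φ k q) '' Kq :=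
    orb_subset_image' φ hact hKq
  have hmem : ∀ n, seq n ∈ Kp ×ˢ ((fun k : T => φ k q) '' Kq) :=
    fun n => ⟨hseq1 n, horbsub (hseq2 n)⟩
  have hcomp : IsCompact (Kp ×ˢ ((fun k : T => φ k q) '' Kq)) := hKpc.prod hCqc
  obtain ⟨⟨k, y⟩, hkymem, hcl⟩ :=
    hcomp.exists_mapClusterPt (u := seq) (f := atTop)
      (Filter.le_principal_iff.2 (Filter.mem_map.2 (Filter.univ_mem' hmem)))
  have hycl : y ∈ closure (Semiflow.orb φ q) := by
    have h2 : MapClusterPt y atTop fun n => (seq n).2 :=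
      hcl.continuousAt_comp continuous_snd.continuousAt
    have h3 : ClusterPt y (𝓟 (Semiflow.orb φ q)) :=
      h2.clusterPt.mono (Filter.le_principal_iff.2
        (Filter.mem_map.2 (Filter.univ_mem' fun n => hseq2 n)))
    exact mem_closure_iff_clusterPt.2 h3
  have hkyp : φ k y = p := by
    refine eq_of_forall_dist_le fun η hη => ?_
    have hc : ContinuousAt (fun pr : T × X => φ pr.1 pr.2) (k, y) := hcont.continuousAt
    have hW : (fun pr : T × X => φ pr.1 pr.2) ⁻¹' Metric.ball (φ k y) (η/2) ∈ 𝓝 (k, y) :=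
      hc (Metric.ball_mem_nhds _ (by positivity))
    obtain ⟨U, hU, V', hV', hUV⟩ := mem_nhds_prod_iff.1 hW
    obtain ⟨r, hr, hrV⟩ := Metric.mem_nhds_iff.1 hV'
    have hfreq : ∃ᶠ n in atTop, seq n ∈ U ×ˢ Metric.ball y (r/2) :=
      mapClusterPt_iff_frequently.1 hcl _ (prod_mem_nhds hU (Metric.ball_mem_nhds _ (by positivity)))
    have hev : ∀ᶠ n : ℕ in atTop, 1 / ((n:ℝ) + 1) < r/2 :=
      tendsto_one_div_add_atTop_nhds_zero_nat.eventually
        (gt_mem_nhds (by positivity : (0:ℝ) < r/2))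
    obtain ⟨n, hn1, hn2⟩ := (hfreq.and_eventually hev).exists
    obtain ⟨hnU, hnball⟩ := hn1
    have hz : dist (φ (sfun n) p) y < r := by
      have h1 := hs2 n
      have h2 : dist (seq n).2 y < r/2 := by
        simpa [Metric.mem_ball] using hnball
      calc dist (φ (sfun n) p) y ≤ dist (φ (sfun n) p) (seq n).2 + dist (seq n).2 y :=
            dist_triangle _ _ _
        _ < 1 / ((n:ℝ) + 1) + r/2 := by linarith
        _ < r/2 + r/2 := by linarith
        _ = r := by ring
    have hmemW : ((seq n).1, φ (sfun n) p) ∈ U ×ˢ V' :=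
      ⟨hnU, hrV (by simpa [Metric.mem_ball] using hz)⟩
    have hres : φ (seq n).1 (φ (sfun n) p) ∈ Metric.ball (φ k y) (η/2) := hUV hmemW
    have heq : φ (seq n).1 (φ (sfun n) p) = p := by
      rw [hact, add_comm]; exact hs1 n
    rw [heq] at hres
    have : dist p (φ k y) < η/2 := by simpa [Metric.mem_ball] using hres
    rw [dist_comm]
    linarith
  have hpcl : p ∈ closure (Semiflow.orb φ q) := by
    have hcontk : Continuous fun x : X => φ k x :=
      hcont.comp (continuous_const.prodMk continuous_id)
    have h1 : φ k y ∈ (fun x : X => φ k x) '' closure (Semiflow.orb φ q) := ⟨y, hycl, rfl⟩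
    have h2 : φ k y ∈ closure ((fun x : X => φ k x) '' Semiflow.orb φ q) :=
      image_closure_subset_closure_image hcontk h1
    have h3 : (fun x : X => φ k x) '' Semiflow.orb φ q ⊆ Semiflow.orb φ q := by
      rintro _ ⟨_, ⟨t, rfl⟩, rfl⟩
      exact ⟨k + t, (hact k t q).symm⟩
    have h4 := closure_mono h3 h2
    rwa [hkyp] at h4
  exact hpq hpcl

/-- In a non-minimal semiflow with dense periodic points, there is a `c > 0`
such that every point is at distance at least `4c` from the orbit of some
periodic point. -/
theorem exists_far_periodic_orbit
{T X : Type*} [AddCommMonoid T] [TopologicalSpace T] [ContinuousAdd T]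
    [MetricSpace X]
    (hT : ¬ IsCompact (Set.univ : Set T))
    (φ : T → X → X)
    (hcont : Continuous fun p : T × X => φ p.1 p.2)
    (hact : ∀ (s t : T) (x : X), φ s (φ t x) = φ (s + t) x)
    (hid : ∀ x : X, φ 0 x = x)
    (hdpp : Semiflow.DPP φ) (hnmin : ¬ Semiflow.Minimal φ) :
    ∃ c > (0 : ℝ), ∀ x : X, ∃ q : X, Semiflow.Periodic φ q ∧
      4 * c ≤ Metric.infDist x (Semiflow.orb φ q) := by
  classical
  obtain ⟨v, hv⟩ : ∃ v, closure (Semiflow.orb φ v) ≠ Set.univ := by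
    by_contra hc; push_neg at hc; exact hnmin hc
  obtain ⟨u, hu⟩ : ∃ u, u ∉ closure (Semiflow.orb φ v) := by
    by_contra hc; push_neg at hc
    exact hv (Set.eq_univ_iff_forall.2 hc)
  have horbv_ne : (Semiflow.orb φ v).Nonempty := ⟨v, 0, hid v⟩
  set ε₀ := Metric.infDist u (Semiflow.orb φ v) with hε₀def
  have hε₀ : 0 < ε₀ := by
    have h1 := (isClosed_closure.notMem_iff_infDist_pos horbv_ne.closure).1 hu
    rwa [Metric.infDist_closure] at h1
  -- Lemma A : some periodic point has non-dense orbit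
  have lemA : ∃ q₀, Semiflow.Periodic φ q₀ ∧ ∃ u', u' ∉ closure (Semiflow.orb φ q₀) := by
    by_contra hc
    push_neg at hc
    obtain ⟨q, hqball, hqper⟩ :
        (Metric.ball u (ε₀/4) ∩ {x | Semiflow.Periodic φ x}).Nonempty :=
      Metric.dense_iff.1 hdpp u (ε₀/4) (by positivity)
    obtain ⟨Kq, hKqc, hKq⟩ := hqper
    obtain ⟨δ, hδ, hmod⟩ := exists_modulus' φ hcont hKqc v (show (0:ℝ) < ε₀/4 by positivity)
    have hvq : v ∈ closure (Semiflow.orb φ q) := hc q ⟨Kq, hKqc, hKq⟩ v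
    obtain ⟨w, hworb, hwv⟩ := Metric.mem_closure_iff.1 hvq δ hδ
    obtain ⟨s, rfl⟩ := hworb
    obtain ⟨k, hkK, hk⟩ := hKq s
    have hwv' : dist (φ s q) v < δ := by rwa [dist_comm] at hwv
    have h2 : dist (φ k (φ s q)) (φ k v) < ε₀/4 := hmod k hkK _ hwv'
    have h1 : φ k (φ s q) = q := by rw [hact, add_comm]; exact hk
    rw [h1] at h2
    have h4 : Metric.infDist u (Semiflow.orb φ v) ≤ dist u (φ k v) :=
      Metric.infDist_le_dist_of_mem ⟨k, rfl⟩
    have h5 : dist u (φ k v) ≤ dist u q + dist q (φ k v) := dist_triangle _ _ _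
    have h6 : dist u q < ε₀/4 := by rwa [Metric.mem_ball, dist_comm] at hqball
    rw [← hε₀def] at h4
    linarith
  obtain ⟨q₀, hq₀per, u', hu'⟩ := lemA
  have horbq₀_ne : (Semiflow.orb φ q₀).Nonempty := ⟨q₀, 0, hid q₀⟩
  set ε := Metric.infDist u' (Semiflow.orb φ q₀) with hεdef
  have hε : 0 < ε := by
    have h1 := (isClosed_closure.notMem_iff_infDist_pos horbq₀_ne.closure).1 hu'
    rwa [Metric.infDist_closure] at h1
  obtain ⟨p, hpball, hpper⟩ :
      (Metric.ball u' (ε/4) ∩ {x | Semiflow.Periodic φ x}).Nonempty :=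
    Metric.dense_iff.1 hdpp u' (ε/4) (by positivity)
  have hpnotin : p ∉ closure (Semiflow.orb φ q₀) := by
    intro hmem
    have h1 : Metric.infDist u' (closure (Semiflow.orb φ q₀)) ≤ dist u' p :=
      Metric.infDist_le_dist_of_mem hmem
    rw [Metric.infDist_closure, ← hεdef] at h1
    have h2 : dist u' p < ε/4 := by rwa [Metric.mem_ball, dist_comm] at hpball
    linarith
  obtain ⟨δ, hδ, hsep⟩ := orbit_separation' φ hcont hact hpper hq₀per hpnotin
  refine ⟨δ/8, by positivity, fun x => ?_⟩
  by_cases hcase : 4 * (δ/8) ≤ Metric.infDist x (Semiflow.orb φ q₀)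
  · exact ⟨q₀, hq₀per, hcase⟩
  · push_neg at hcase
    obtain ⟨y, hyorb, hxy⟩ := (Metric.infDist_lt_iff horbq₀_ne).1 hcase
    refine ⟨p, hpper, ?_⟩
    have horbp_ne : (Semiflow.orb φ p).Nonempty := ⟨p, 0, hid p⟩
    by_contra hlt
    push_neg at hlt
    obtain ⟨z, hzorb, hxz⟩ := (Metric.infDist_lt_iff horbp_ne).1 hlt
    have hzy := hsep z hzorb y hyorb
    have htr : dist z y ≤ dist x z + dist x y := by
      calc dist z y ≤ dist z x + dist x y := dist_triangle _ _ _
        _ = dist x z + dist x y := by rw [dist_comm]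
    linarith
end

section
/- Let (T,X) be a semiflow on a metric space X which is topologically transitive, has a dense set of periodic points, and is non-minimal. Then (T,X) is sensitive on initial conditions. -/
/-!
Non-minimality gives an orbit closure `A ≠ X`, and density of periodic points a periodic
point `q ∉ A`. The orbit closure of `q` is compact and minimal, hence disjoint from the
invariant set `A`, so the two orbit closures are at positive distance and every point is
far from one of two orbits. Near any `x` pick a periodic point `p` and, by transitivity, a
point `z` whose orbit visits a neighbourhood of a far orbit; at a return time of `p` the
orbits of `p` and `z` are then far apart, so one of them is far from the orbit of `x`.
-/

open Set Metric

theorem IsCompact.exists_pos_forall_le_dist_or {X : Type*} [PseudoMetricSpace X]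
    {s t : Set X} (hs : IsCompact s) (ht : IsClosed t) (hst : Disjoint s t) :
    ∃ η > 0, ∀ x, (∀ a ∈ s, η ≤ dist x a) ∨ (∀ b ∈ t, η ≤ dist x b) := by
  obtain ⟨r, hr, hsep⟩ := exists_pos_forall_lt_edist hs ht hst
  refine ⟨r / 2, by positivity, fun x => ?_⟩
  by_contra! ⟨⟨a, ha, hxa⟩, ⟨b, hb, hxb⟩⟩
  have hab : (r : ℝ) < dist a b := by
    simpa [edist_dist, ENNReal.ofReal_lt_ofReal_iff_of_nonneg] using hsep a ha b hb
  linarith [dist_triangle_left a b x]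

namespace Semiflow

variable {T X : Type*} {φ : T → X → X}

theorem orb_subset_image_of_syndetic_fix [AddCommMonoid T]
    (hact : ∀ (s t : T) (x : X), φ s (φ t x) = φ (s + t) x) {q : X} {K : Set T}
    (hK : ∀ t : T, ∃ k ∈ K, t + k ∈ fix φ q) :
    orb φ q ⊆ (fun k => φ k q) '' K := by
  rintro _ ⟨t, rfl⟩
  obtain ⟨k, -, hk⟩ := hK t
  obtain ⟨k', hk', hk'k⟩ := hK k
  refine ⟨k', hk', ?_⟩
  calc φ k' q = φ k' (φ (t + k) q) := by rw [show φ (t + k) q = q from hk]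
    _ = φ t (φ (k + k') q) := by rw [hact, hact, add_comm k', add_assoc]
    _ = φ t q := by rw [show φ (k + k') q = q from hk'k]

section Orbits

variable [AddCommMonoid T] [TopologicalSpace T] [TopologicalSpace X]

theorem mapsTo_closure_orb (hcont : Continuous fun p : T × X => φ p.1 p.2)
    (hact : ∀ (s t : T) (x : X), φ s (φ t x) = φ (s + t) x) (t : T) (u : X) :
    MapsTo (φ t) (closure (orb φ u)) (closure (orb φ u)) := by
  refine MapsTo.closure ?_ (hcont.comp (Continuous.prodMk_right t))
  rintro _ ⟨s, rfl⟩
  exact ⟨t + s, (hact t s u).symm⟩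

theorem closure_orb_subset (hcont : Continuous fun p : T × X => φ p.1 p.2)
    (hact : ∀ (s t : T) (x : X), φ s (φ t x) = φ (s + t) x) {y z : X}
    (hz : z ∈ closure (orb φ y)) : closure (orb φ z) ⊆ closure (orb φ y) :=
  closure_minimal (range_subset_iff.2 fun t => mapsTo_closure_orb hcont hact t y hz)
    isClosed_closure

theorem Periodic.isCompact_closure_orb [T2Space X]
    (hcont : Continuous fun p : T × X => φ p.1 p.2)
    (hact : ∀ (s t : T) (x : X), φ s (φ t x) = φ (s + t) x) {q : X} (hq : Periodic φ q) :
    IsCompact (closure (orb φ q)) := by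
  obtain ⟨K, hKc, hK⟩ := hq
  have himg : IsCompact ((fun k => φ k q) '' K) :=
    hKc.image (hcont.comp (continuous_id.prodMk continuous_const))
  exact himg.of_isClosed_subset isClosed_closure
    (closure_minimal (orb_subset_image_of_syndetic_fix hact hK) himg.isClosed)

end Orbits

section Metric

variable [TopologicalSpace T] [PseudoMetricSpace X]

theorem exists_isOpen_forall_dist_apply_lt (hcont : Continuous fun p : T × X => φ p.1 p.2)
    {K : Set T} (hK : IsCompact K) (a : X) {c : ℝ} (hc : 0 < c) :
    ∃ W : Set X, IsOpen W ∧ a ∈ W ∧ ∀ w ∈ W, ∀ k ∈ K, dist (φ k w) (φ k a) < c := by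
  have hopen : IsOpen {p : T × X | dist (φ p.1 p.2) (φ p.1 a) < c} :=
    isOpen_lt (hcont.dist (hcont.comp (continuous_fst.prodMk continuous_const)))
      continuous_const
  have hsub : K ×ˢ {a} ⊆ {p : T × X | dist (φ p.1 p.2) (φ p.1 a) < c} := by
    rintro ⟨k, w⟩ ⟨-, rfl⟩
    simpa using hc
  obtain ⟨U, W, -, hW, hKU, haW, hUW⟩ :=
    generalized_tube_lemma hK isCompact_singleton hopen hsub
  exact ⟨W, hW, haW rfl, fun w hw k hk => hUW (mk_mem_prod (hKU hk) hw)⟩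

variable [AddCommMonoid T]

theorem Periodic.mem_closure_orb (hcont : Continuous fun p : T × X => φ p.1 p.2)
    (hact : ∀ (s t : T) (x : X), φ s (φ t x) = φ (s + t) x) {q z : X} (hq : Periodic φ q)
    (hz : z ∈ closure (orb φ q)) : q ∈ closure (orb φ z) := by
  obtain ⟨K, hKc, hK⟩ := hq
  refine Metric.mem_closure_iff.2 fun ε hε => ?_
  obtain ⟨W, hWo, hzW, hW⟩ := exists_isOpen_forall_dist_apply_lt hcont hKc z hε
  obtain ⟨_, hwW, t, rfl⟩ := mem_closure_iff.1 hz W hWo hzW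
  obtain ⟨k, hk, hkfix⟩ := hK t
  refine ⟨φ k z, ⟨k, rfl⟩, ?_⟩
  have hreturn : φ k (φ t q) = q := by rw [hact, add_comm]; exact hkfix
  simpa [hreturn] using hW _ hwW k hk

theorem Periodic.disjoint_closure_orb (hcont : Continuous fun p : T × X => φ p.1 p.2)
    (hact : ∀ (s t : T) (x : X), φ s (φ t x) = φ (s + t) x) {q y : X} (hq : Periodic φ q)
    (hqy : q ∉ closure (orb φ y)) : Disjoint (closure (orb φ q)) (closure (orb φ y)) :=
  Set.disjoint_left.2 fun _ hzq hzy =>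
    hqy (closure_orb_subset hcont hact hzy (hq.mem_closure_orb hcont hact hzq))

theorem exists_le_dist_apply_of_forall_le_dist_orb
    (hcont : Continuous fun p : T × X => φ p.1 p.2)
    (hact : ∀ (s t : T) (x : X), φ s (φ t x) = φ (s + t) x)
    (htt : TopTrans φ) (hdpp : DPP φ) {η δ : ℝ} (hδ : 0 < δ) (hδη : δ ≤ η / 4) {x u : X}
    (hfar : ∀ t, η ≤ dist x (φ t u)) :
    ∃ p z : X, dist x p < δ ∧ dist x z < δ ∧ ∃ s : T, η / 2 ≤ dist (φ s p) (φ s z) := by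
  obtain ⟨p, ⟨K, hKc, hK⟩, hp⟩ :=
    hdpp.exists_mem_open isOpen_ball ⟨x, mem_ball_self hδ⟩
  obtain ⟨W, hWo, huW, hW⟩ :=
    exists_isOpen_forall_dist_apply_lt hcont hKc u (show 0 < η / 4 by linarith)
  obtain ⟨t, _, ⟨z, hz, rfl⟩, hzW⟩ :=
    htt (ball x δ) W isOpen_ball hWo ⟨x, mem_ball_self hδ⟩ ⟨u, huW⟩
  obtain ⟨k, hk, hkfix⟩ := hK t
  have hp_return : φ (t + k) p = p := hkfix
  have hz_near : dist (φ (t + k) z) (φ k u) < η / 4 := by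
    rw [add_comm, ← hact]; exact hW _ hzW k hk
  rw [mem_ball'] at hp hz
  refine ⟨p, z, hp, hz, t + k, ?_⟩
  rw [hp_return]
  linarith [hfar k, dist_triangle4 x p (φ (t + k) z) (φ k u)]

theorem sensitive_of_forall_exists_le_dist_orb
    (hcont : Continuous fun p : T × X => φ p.1 p.2)
    (hact : ∀ (s t : T) (x : X), φ s (φ t x) = φ (s + t) x)
    (htt : TopTrans φ) (hdpp : DPP φ) {η : ℝ} (hη : 0 < η)
    (hfar : ∀ x, ∃ u, ∀ t, η ≤ dist x (φ t u)) : Sensitive φ := by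
  refine ⟨η / 4, by positivity, fun x ε hε => ?_⟩
  obtain ⟨u, hu⟩ := hfar x
  obtain ⟨p, z, hp, hz, s, hpz⟩ := exists_le_dist_apply_of_forall_le_dist_orb hcont hact
    htt hdpp (lt_min hε (by positivity)) (min_le_right ε (η / 4)) hu
  have hε' : min ε (η / 4) ≤ ε := min_le_left _ _
  rcases le_or_gt (η / 4) (dist (φ s x) (φ s p)) with hxp | hxp
  · exact ⟨p, by linarith, s, hxp⟩
  · refine ⟨z, by linarith, s, ?_⟩
    linarith [dist_triangle_left (φ s p) (φ s z) (φ s x)]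

end Metric

end Semiflow

open Semiflow in
theorem sensitive_of_topTrans_dpp_nonminimal_general
{T X : Type*} [AddCommMonoid T] [TopologicalSpace T]
    [MetricSpace X]
    (φ : T → X → X)
    (hcont : Continuous fun p : T × X => φ p.1 p.2)
    (hact : ∀ (s t : T) (x : X), φ s (φ t x) = φ (s + t) x)
    (htt : Semiflow.TopTrans φ) (hdpp : Semiflow.DPP φ)
    (hnmin : ¬ Semiflow.Minimal φ) :
    Semiflow.Sensitive φ := by
  obtain ⟨y, hy⟩ : ∃ y, closure (orb φ y) ≠ univ := by simpa [Semiflow.Minimal] using hnmin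
  obtain ⟨q, hq, hqy⟩ :=
    hdpp.exists_mem_open isClosed_closure.isOpen_compl (nonempty_compl.2 hy)
  obtain ⟨η, hη, hsep⟩ := (hq.isCompact_closure_orb hcont hact).exists_pos_forall_le_dist_or
    isClosed_closure (hq.disjoint_closure_orb hcont hact hqy)
  refine sensitive_of_forall_exists_le_dist_orb hcont hact htt hdpp hη fun x => ?_
  rcases hsep x with hfar | hfar
  · exact ⟨q, fun t => hfar _ (subset_closure ⟨t, rfl⟩)⟩
  · exact ⟨y, fun t => hfar _ (subset_closure ⟨t, rfl⟩)⟩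

/-- A topologically transitive, non-minimal semiflow with dense periodic
points is sensitive on initial conditions. -/
theorem sensitive_of_topTrans_dpp_nonminimal
{T X : Type*} [AddCommMonoid T] [TopologicalSpace T] [ContinuousAdd T]
    [MetricSpace X]
    (hT : ¬ IsCompact (Set.univ : Set T))
    (φ : T → X → X)
    (hcont : Continuous fun p : T × X => φ p.1 p.2)
    (hact : ∀ (s t : T) (x : X), φ s (φ t x) = φ (s + t) x)
    (hid : ∀ x : X, φ 0 x = x)
    (htt : Semiflow.TopTrans φ) (hdpp : Semiflow.DPP φ)
    (hnmin : ¬ Semiflow.Minimal φ) :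
    Semiflow.Sensitive φ :=
  sensitive_of_topTrans_dpp_nonminimal_general φ hcont hact htt hdpp hnmin
end

section
/- Let (T,X) be a semiflow on a metric space X which is topologically transitive and has a dense set of periodic points, and suppose there is a periodic point p ∈ X with X = orb(p). Then (T,X) is uniformly equicontinuous and is not eventually sensitive on initial conditions. -/
/-!
Since `T` is commutative, an element fixing `p` fixes every point of `X = orb p`. Syndeticity
of `fix p` then gives, for each `t`, some `k` in a fixed compact set `K` with `φ (t + k) = id`, and
composing two such inverses shows that every `φ t` equals some `φ k` with `k ∈ K`. Hence
`X = (φ · p) '' K` is compact, and the family `(φ k)_{k ∈ K}`, being jointly continuous over a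
compact parameter set, is equicontinuous, hence uniformly equicontinuous on the compact `X`.
-/

open Set

theorem IsCompact.equicontinuous_restrict {T X α : Type*} [TopologicalSpace T]
    [TopologicalSpace X] [UniformSpace α] {f : T → X → α}
    (hf : Continuous fun q : T × X => f q.1 q.2) {K : Set T} (hK : IsCompact K) :
    Equicontinuous fun k : K => f k := by
  intro x₀ U hU
  have hf' : ContinuousOn (fun q : X × T => f q.2 q.1) (univ ×ˢ K) :=
    (hf.comp continuous_swap).continuousOn
  obtain ⟨V, hV, hVU⟩ := hK.mem_uniformity_of_prod (f := fun x k => f k x) hf' (mem_univ x₀)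
    (symm_le_uniformity hU)
  rw [nhdsWithin_univ] at hV
  filter_upwards [hV] with x hx k using hVU x hx k k.2

namespace Semiflow

variable {T X : Type*}

theorem unifEquicont_iff [PseudoMetricSpace X] {φ : T → X → X} :
    UnifEquicont φ ↔ UniformEquicontinuous φ :=
  Metric.uniformEquicontinuous_iff.symm

theorem not_evSensitive_of_unifEquicont [PseudoMetricSpace X] [Nonempty X] {φ : T → X → X}
    (h : UnifEquicont φ) : ¬ EvSensitive φ := by
  rintro ⟨c, hc, hES⟩
  obtain ⟨δ, hδ, hδc⟩ := h c hc
  obtain ⟨t₀, t, y, hy, hsep⟩ := hES (Classical.arbitrary X) δ hδ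
  exact (hδc _ y hy t).not_ge hsep

theorem unifEquicont_of_range_subset_image [TopologicalSpace T] [PseudoMetricSpace X]
    [CompactSpace X]
    {φ : T → X → X} (hcont : Continuous fun q : T × X => φ q.1 q.2) {K : Set T}
    (hK : IsCompact K) (hrange : range φ ⊆ φ '' K) : UnifEquicont φ := by
  choose g hgK hg using fun t => hrange (mem_range_self t)
  have hφ : φ = (fun k : K => φ k) ∘ fun t => ⟨g t, hgK t⟩ := funext fun t => (hg t).symm
  rw [unifEquicont_iff, hφ]
  exact (CompactSpace.uniformEquicontinuous_of_equicontinuous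
    (hK.equicontinuous_restrict hcont)).comp _

variable {φ : T → X → X} {p : X}

theorem eq_id_of_apply_eq_of_orb_eq_univ [AddCommMonoid T]
    (hact : ∀ (s t : T) (x : X), φ s (φ t x) = φ (s + t) x) (hXorb : orb φ p = univ)
    {a : T} (ha : φ a p = p) : φ a = id := by
  funext x
  obtain ⟨t, rfl⟩ : x ∈ orb φ p := hXorb ▸ mem_univ x
  show φ a (φ t p) = φ t p
  rw [hact, add_comm, ← hact, ha]

theorem Periodic.exists_isCompact_range_subset_image [AddCommMonoid T] [TopologicalSpace T]
    (hp : Periodic φ p) (hact : ∀ (s t : T) (x : X), φ s (φ t x) = φ (s + t) x)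
    (hXorb : orb φ p = univ) :
    ∃ K : Set T, IsCompact K ∧ range φ ⊆ φ '' K := by
  obtain ⟨K, hK, hsyn⟩ := hp
  have hinv (t : T) : ∃ k ∈ K, φ (t + k) = id := by
    obtain ⟨k, hk, hfix⟩ := hsyn t
    exact ⟨k, hk, eq_id_of_apply_eq_of_orb_eq_univ hact hXorb hfix⟩
  refine ⟨K, hK, ?_⟩
  rintro _ ⟨t, rfl⟩
  obtain ⟨k, -, hk⟩ := hinv t
  obtain ⟨k', hk'K, hk'⟩ := hinv k
  -- `φ k'` inverts `φ k`, which inverts `φ t`, so `φ t = φ k'`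
  refine ⟨k', hk'K, funext fun x => ?_⟩
  calc φ k' x = φ (t + k) (φ k' x) := by rw [hk, id]
    _ = φ t (φ (k + k') x) := by rw [hact, hact, add_assoc]
    _ = φ t x := by rw [hk', id]

theorem compactSpace_of_range_subset_image [TopologicalSpace T] [TopologicalSpace X]
    (hXorb : orb φ p = univ) (hcont : Continuous fun q : T × X => φ q.1 q.2) {K : Set T}
    (hK : IsCompact K) (hrange : range φ ⊆ φ '' K) : CompactSpace X := by
  refine ⟨?_⟩
  have : (fun k => φ k p) '' K = univ := by
    refine eq_univ_of_univ_subset fun x _ => ?_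
    obtain ⟨t, rfl⟩ : x ∈ orb φ p := hXorb ▸ mem_univ x
    obtain ⟨k, hk, hkt⟩ := hrange (mem_range_self t)
    exact ⟨k, hk, congrFun hkt p⟩
  exact this ▸ hK.image (hcont.comp (continuous_id.prodMk continuous_const))

end Semiflow

theorem unifEquicont_not_evSensitive_of_orbit_eq_univ_general
{T X : Type*} [AddCommMonoid T] [TopologicalSpace T]
    [MetricSpace X]
    (φ : T → X → X)
    (hcont : Continuous fun p : T × X => φ p.1 p.2)
    (hact : ∀ (s t : T) (x : X), φ s (φ t x) = φ (s + t) x)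
    (p : X) (hp : Semiflow.Periodic φ p)
    (hXorb : Semiflow.orb φ p = Set.univ) :
    Semiflow.UnifEquicont φ ∧ ¬ Semiflow.EvSensitive φ := by
  obtain ⟨K, hK, hrange⟩ := hp.exists_isCompact_range_subset_image hact hXorb
  have : CompactSpace X := Semiflow.compactSpace_of_range_subset_image hXorb hcont hK hrange
  have : Nonempty X := ⟨p⟩
  have hueq := Semiflow.unifEquicont_of_range_subset_image hcont hK hrange
  exact ⟨hueq, Semiflow.not_evSensitive_of_unifEquicont hueq⟩

/-- First case of the dichotomy: if the space is a single periodic orbit, the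
semiflow is uniformly equicontinuous and not eventually sensitive. -/
theorem unifEquicont_not_evSensitive_of_orbit_eq_univ
{T X : Type*} [AddCommMonoid T] [TopologicalSpace T] [ContinuousAdd T]
    [MetricSpace X]
    (hT : ¬ IsCompact (Set.univ : Set T))
    (φ : T → X → X)
    (hcont : Continuous fun p : T × X => φ p.1 p.2)
    (hact : ∀ (s t : T) (x : X), φ s (φ t x) = φ (s + t) x)
    (hid : ∀ x : X, φ 0 x = x)
    (htt : Semiflow.TopTrans φ) (hdpp : Semiflow.DPP φ)
    (p : X) (hp : Semiflow.Periodic φ p)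
    (hXorb : Semiflow.orb φ p = Set.univ) :
    Semiflow.UnifEquicont φ ∧ ¬ Semiflow.EvSensitive φ :=
  unifEquicont_not_evSensitive_of_orbit_eq_univ_general φ hcont hact p hp hXorb
end

section
/- Let (T,X) be a semiflow on a metric space X which is topologically transitive and has a dense set of periodic points, and suppose there is a periodic point p ∈ X with X ≠ orb(p). Then (T,X) is eventually sensitive on initial conditions and is not uniformly equicontinuous. -/
open Metric Set

section
variable {T X : Type*} [AddCommMonoid T] [TopologicalSpace T] [MetricSpace X]
variable {φ : T → X → X}

lemma orb_eq_image (hact : ∀ (s t : T) (x : X), φ s (φ t x) = φ (s + t) x)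
    {p : X} {K : Set T} (hsyn : ∀ t : T, ∃ k ∈ K, φ (t + k) p = p) :
    Semiflow.orb φ p = (fun k => φ k p) '' K := by
  apply Subset.antisymm
  · rintro _ ⟨t, rfl⟩
    obtain ⟨k, hkK, hk⟩ := hsyn t
    obtain ⟨k₂, hk2K, hk2⟩ := hsyn k
    refine ⟨k₂, hk2K, ?_⟩
    calc φ k₂ p = φ k₂ (φ (t + k) p) := by rw [hk]
      _ = φ (k₂ + (t + k)) p := hact _ _ _
      _ = φ (t + (k + k₂)) p := by rw [show k₂ + (t + k) = t + (k + k₂) by abel]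
      _ = φ t (φ (k + k₂) p) := (hact _ _ _).symm
      _ = φ t p := by rw [hk2]
  · rintro _ ⟨k, _, rfl⟩; exact ⟨k, rfl⟩

lemma mem_orb_trans (hact : ∀ (s t : T) (x : X), φ s (φ t x) = φ (s + t) x)
    {q : X} {K : Set T} (hsyn : ∀ t : T, ∃ k ∈ K, φ (t + k) q = q)
    {p : X} {t : T} (h : φ t q ∈ Semiflow.orb φ p) : q ∈ Semiflow.orb φ p := by
  obtain ⟨k, _, hk⟩ := hsyn t
  obtain ⟨s, hs⟩ := h
  refine ⟨k + s, ?_⟩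
  calc φ (k + s) p = φ k (φ s p) := (hact _ _ _).symm
    _ = φ k (φ t q) := by rw [show φ s p = φ t q from hs]
    _ = φ (k + t) q := hact _ _ _
    _ = φ (t + k) q := by rw [add_comm]
    _ = q := hk

lemma tube_nhd (hcont : Continuous fun p : T × X => φ p.1 p.2)
    {K : Set T} (hK : IsCompact K) (w : X) {c : ℝ} (hc : 0 < c) :
    ∃ V : Set X, IsOpen V ∧ w ∈ V ∧ ∀ k ∈ K, ∀ y ∈ V, dist (φ k y) (φ k w) < c := by
  have hg : Continuous fun q : T × X => dist (φ q.1 q.2) (φ q.1 w) :=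
    (hcont.dist (hcont.comp (continuous_fst.prodMk continuous_const)))
  have hopen : IsOpen {q : T × X | dist (φ q.1 q.2) (φ q.1 w) < c} :=
    isOpen_lt hg continuous_const
  have hsub : K ×ˢ ({w} : Set X) ⊆ {q : T × X | dist (φ q.1 q.2) (φ q.1 w) < c} := by
    rintro ⟨k, y⟩ ⟨-, hy⟩
    rcases hy with rfl
    simpa using hc
  obtain ⟨u, v, _, hv, hKu, hwv, huv⟩ :=
    generalized_tube_lemma hK isCompact_singleton hopen hsub
  exact ⟨v, hv, hwv rfl, fun k hkK y hyv => huv (Set.mk_mem_prod (hKu hkK) hyv)⟩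

end

section
variable {T X : Type*} [AddCommMonoid T] [TopologicalSpace T] [MetricSpace X]
variable {φ : T → X → X}

set_option linter.unusedSectionVars false in
lemma sensitive_pair
    (hcont : Continuous fun p : T × X => φ p.1 p.2)
    (hact : ∀ (s t : T) (x : X), φ s (φ t x) = φ (s + t) x)
    (htt : Semiflow.TopTrans φ) (hdpp : Semiflow.DPP φ)
    {c : ℝ} (hc : 0 < c) (x w : X)
    (hfar : 4 * c ≤ infDist x (Semiflow.orb φ w)) {ε : ℝ} (hε : 0 < ε) :
    ∃ y, dist x y < ε ∧ ∃ t, c ≤ dist (φ t x) (φ t y) := by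
  set ε' : ℝ := min ε c with hε'def
  have hε' : 0 < ε' := lt_min hε hc
  have hε'c : ε' ≤ c := min_le_right _ _
  have hε'ε : ε' ≤ ε := min_le_left _ _
  -- periodic point r near x
  obtain ⟨r, hrper, hrball⟩ :=
    hdpp.exists_mem_open isOpen_ball (Set.nonempty_of_mem (mem_ball_self hε') :
      (ball x ε').Nonempty)
  obtain ⟨K, hKc, hKs⟩ := hrper
  -- tube neighborhood of w
  obtain ⟨V, hVo, hwV, hV⟩ := tube_nhd (φ := φ) hcont hKc w hc
  -- transitivity
  obtain ⟨t, y0, ⟨z, hzU, hz⟩, hyV⟩ :=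
    htt (ball x ε') V isOpen_ball hVo ⟨x, mem_ball_self hε'⟩ ⟨w, hwV⟩
  have hzV : φ t z ∈ V := by rwa [show φ t z = y0 from hz]
  obtain ⟨k, hkK, hk⟩ := hKs t
  have hfixr : φ (t + k) r = r := hk
  have h2 : dist (φ k (φ t z)) (φ k w) < c := hV k hkK (φ t z) hzV
  have hstz : φ (t + k) z = φ k (φ t z) := by rw [hact, add_comm]
  have hw' : φ k w ∈ Semiflow.orb φ w := ⟨k, rfl⟩
  have h3 : 4 * c ≤ dist x (φ k w) := hfar.trans (infDist_le_dist_of_mem hw')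
  have h4 : 3 * c ≤ dist x (φ (t + k) z) := by
    have := dist_triangle x (φ (t + k) z) (φ k w)
    rw [hstz] at *
    linarith [dist_comm (φ k (φ t z)) (φ k w) ▸ h2]
  have hxr : dist x r < ε' := by
    have := mem_ball.mp hrball; rwa [dist_comm]
  have hxz : dist x z < ε' := by
    have := mem_ball.mp hzU; rwa [dist_comm]
  have h5 : 2 * c ≤ dist (φ (t + k) r) (φ (t + k) z) := by
    rw [hfixr]
    have := dist_triangle x r (φ (t + k) z)
    have := dist_triangle r x (φ (t + k) z)
    linarith
  by_cases hcase : c ≤ dist (φ (t + k) x) (φ (t + k) r)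
  · exact ⟨r, lt_of_lt_of_le hxr hε'ε, t + k, hcase⟩
  · refine ⟨z, lt_of_lt_of_le hxz hε'ε, t + k, ?_⟩
    push_neg at hcase
    have := dist_triangle (φ (t + k) r) (φ (t + k) x) (φ (t + k) z)
    have := dist_comm (φ (t + k) r) (φ (t + k) x)
    linarith

end

/-- Second case of the dichotomy: if some periodic orbit is not the whole
space, the semiflow is eventually sensitive and not uniformly equicontinuous. -/
theorem evSensitive_not_unifEquicont_of_orbit_ne_univ
{T X : Type*} [AddCommMonoid T] [TopologicalSpace T] [ContinuousAdd T]
    [MetricSpace X]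
    (hT : ¬ IsCompact (Set.univ : Set T))
    (φ : T → X → X)
    (hcont : Continuous fun p : T × X => φ p.1 p.2)
    (hact : ∀ (s t : T) (x : X), φ s (φ t x) = φ (s + t) x)
    (hid : ∀ x : X, φ 0 x = x)
    (htt : Semiflow.TopTrans φ) (hdpp : Semiflow.DPP φ)
    (p : X) (hp : Semiflow.Periodic φ p)
    (hXorb : Semiflow.orb φ p ≠ Set.univ) :
    Semiflow.EvSensitive φ ∧ ¬ Semiflow.UnifEquicont φ := by
    classical
  obtain ⟨Kp, hKpc, hKps⟩ := hp
  have hKps' : ∀ t : T, ∃ k ∈ Kp, φ (t + k) p = p := hKps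
  have hcomp_p : IsCompact (Semiflow.orb φ p) := by
    rw [orb_eq_image hact hKps']
    exact hKpc.image (hcont.comp (continuous_id.prodMk continuous_const))
  have horbp_ne : (Semiflow.orb φ p).Nonempty := ⟨φ 0 p, 0, rfl⟩
  obtain ⟨x₀, hx₀⟩ := (Set.ne_univ_iff_exists_notMem _).mp hXorb
  have hd₀ : 0 < infDist x₀ (Semiflow.orb φ p) :=
    (hcomp_p.isClosed.notMem_iff_infDist_pos horbp_ne).mp hx₀
  obtain ⟨q, hqper, hqball⟩ :=
    hdpp.exists_mem_open isOpen_ball ⟨x₀, mem_ball_self hd₀⟩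
  obtain ⟨Kq, hKqc, hKqs⟩ := hqper
  have hKqs' : ∀ t : T, ∃ k ∈ Kq, φ (t + k) q = q := hKqs
  have hcomp_q : IsCompact (Semiflow.orb φ q) := by
    rw [orb_eq_image hact hKqs']
    exact hKqc.image (hcont.comp (continuous_id.prodMk continuous_const))
  have horbq_ne : (Semiflow.orb φ q).Nonempty := ⟨φ 0 q, 0, rfl⟩
  have hqnot : q ∉ Semiflow.orb φ p := by
    intro h
    have h1 : infDist x₀ (Semiflow.orb φ p) ≤ dist x₀ q := infDist_le_dist_of_mem h
    have h2 : dist q x₀ < infDist x₀ (Semiflow.orb φ p) := mem_ball.mp hqball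
    rw [dist_comm] at h2; linarith
  have hdisj : Disjoint (Semiflow.orb φ p) (Semiflow.orb φ q) := by
    rw [Set.disjoint_right]
    rintro y ⟨t, rfl⟩ hy
    exact hqnot (mem_orb_trans hact hKqs' hy)
  obtain ⟨δ, hδ, hthick⟩ := hdisj.exists_thickenings hcomp_p hcomp_q.isClosed
  have hlb : ∀ a ∈ Semiflow.orb φ p, ∀ b ∈ Semiflow.orb φ q, δ ≤ dist a b := by
    intro a ha b hb
    by_contra h; push_neg at h
    exact Set.disjoint_left.mp hthick
      (mem_thickening_iff.mpr ⟨a, ha, by rwa [dist_comm]⟩)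
      (self_subset_thickening hδ _ hb)
  have hc : (0 : ℝ) < δ / 8 := by positivity
  have hkey : ∀ x : X, ∀ ε > (0 : ℝ),
      ∃ y, dist x y < ε ∧ ∃ t, δ / 8 ≤ dist (φ t x) (φ t y) := by
    intro x ε hε
    have hfar : 4 * (δ / 8) ≤ infDist x (Semiflow.orb φ p) ∨
        4 * (δ / 8) ≤ infDist x (Semiflow.orb φ q) := by
      by_contra h; push_neg at h
      obtain ⟨h1, h2⟩ := h
      obtain ⟨a, ha, hda⟩ := (infDist_lt_iff horbp_ne).mp h1
      obtain ⟨b, hb, hdb⟩ := (infDist_lt_iff horbq_ne).mp h2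
      have hab := hlb a ha b hb
      have htr := dist_triangle a x b
      have hca := dist_comm a x
      linarith
    rcases hfar with h | h
    · exact sensitive_pair hcont hact htt hdpp hc x p h hε
    · exact sensitive_pair hcont hact htt hdpp hc x q h hε
  constructor
  · refine ⟨δ / 8, hc, fun x ε hε => ?_⟩
    obtain ⟨y, hy, t, ht⟩ := hkey x ε hε
    exact ⟨0, t, y, by rwa [hid], by rwa [hid]⟩
  · intro h
    obtain ⟨δ₀, hδ₀, hδ₀'⟩ := h (δ / 8) hc
    obtain ⟨y, hy, t, ht⟩ := hkey p δ₀ hδ₀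
    exact absurd (hδ₀' p y hy t) (not_lt.mpr ht)
end
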